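/- For α > 1, the norm of the Cesàro operator 𝒞 on the α-Bloch space ℬ^α (with norm ‖f‖ = |f(0)| + sup_{z∈𝔻}(1-|z|²)^α|f'(z)|) is at least 3/2. -/

import Mathlib

/-- The Cesàro operator `𝒞f(z) = ∫₀¹ f(tz)/(1-tz) dt`. -/
noncomputable def cesaro (f : ℂ → ℂ) (z : ℂ) : ℂ :=
  ∫ t in (0 : ℝ)..1, f ((t : ℂ) * z) / (1 - (t : ℂ) * z)

/-- The `α`-Bloch norm `‖f‖ = |f(0)| + sup_{z∈𝔻}(1-|z|²)^α |f'(z)|`. -/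
noncomputable def blochNorm (α : ℝ) (f : ℂ → ℂ) : ℝ :=
  ‖f 0‖ + sSup {y : ℝ | ∃ z : ℂ, ‖z‖ < 1 ∧ y = (1 - ‖z‖ ^ 2) ^ α * ‖deriv f z‖}

/-!
The constant function `1` has Bloch norm `1`, while `𝒞1(z) = ∫₀¹ dt/(1-tz)` satisfies
`𝒞1(0) = 1` and `(𝒞1)'(0) = ∫₀¹ t dt = 1/2`, so `‖𝒞1‖ ≥ 3/2`. Since an unbounded `sSup` is `0`
in Lean, this needs the weighted derivatives of `𝒞1` to be bounded: differentiating under the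
integral, `|(𝒞1)'(z)| ≤ ∫₀¹ dt/(1-t|z|)² = 1/(1-|z|)`, and `(1-|z|²)^α/(1-|z|) ≤ 2` for `α ≥ 1`.
-/

open MeasureTheory Metric Set intervalIntegral
open scoped Interval

def blochWeightedDerivs (α : ℝ) (f : ℂ → ℂ) : Set ℝ :=
  {y : ℝ | ∃ z : ℂ, ‖z‖ < 1 ∧ y = (1 - ‖z‖ ^ 2) ^ α * ‖deriv f z‖}

lemma blochWeightedDerivs_const (α : ℝ) (a : ℂ) : blochWeightedDerivs α (fun _ => a) = {0} := by
  ext y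
  simpa [blochWeightedDerivs] using fun _ => ⟨0, by simp⟩

lemma blochNorm_const (α : ℝ) (a : ℂ) : blochNorm α (fun _ => a) = ‖a‖ := by
  change ‖a‖ + sSup (blochWeightedDerivs α fun _ => a) = ‖a‖
  simp [blochWeightedDerivs_const]

lemma add_le_blochNorm {α : ℝ} {f : ℂ → ℂ} (hf : BddAbove (blochWeightedDerivs α f)) {z : ℂ}
    (hz : ‖z‖ < 1) : ‖f 0‖ + (1 - ‖z‖ ^ 2) ^ α * ‖deriv f z‖ ≤ blochNorm α f :=
  add_le_add le_rfl (le_csSup hf ⟨z, hz, rfl⟩)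

lemma one_sub_mul_pos {t r : ℝ} (ht : t ∈ Icc (0 : ℝ) 1) (hr : r < 1) : 0 < 1 - t * r := by
  rcases le_or_gt r 0 with hr0 | hr0
  · nlinarith [mul_nonpos_of_nonneg_of_nonpos ht.1 hr0]
  · nlinarith [mul_le_of_le_one_left hr0.le ht.2]

lemma one_sub_mul_le_norm_one_sub_ofReal_mul {t : ℝ} (ht : 0 ≤ t) {x : ℂ} {r : ℝ}
    (hx : ‖x‖ ≤ r) : 1 - t * r ≤ ‖1 - (t : ℂ) * x‖ := by
  have h := norm_sub_norm_le (1 : ℂ) (t * x)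
  rw [norm_one, norm_mul, Complex.norm_real, Real.norm_of_nonneg ht] at h
  nlinarith [mul_le_mul_of_nonneg_left hx ht]

lemma one_sub_ofReal_mul_ne_zero {t : ℝ} (ht : t ∈ Icc (0 : ℝ) 1) {x : ℂ} (hx : ‖x‖ < 1) :
    1 - (t : ℂ) * x ≠ 0 :=
  norm_pos_iff.mp <|
    (one_sub_mul_pos ht hx).trans_le (one_sub_mul_le_norm_one_sub_ofReal_mul ht.1 le_rfl)

lemma norm_ofReal_div_one_sub_ofReal_mul_sq_le {t : ℝ} (ht : t ∈ Icc (0 : ℝ) 1) {x : ℂ} {r : ℝ}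
    (hx : ‖x‖ ≤ r) (hr : r < 1) : ‖(t : ℂ) / (1 - t * x) ^ 2‖ ≤ ((1 - t * r) ^ 2)⁻¹ := by
  have hpos := one_sub_mul_pos ht hr
  rw [norm_div, norm_pow, Complex.norm_real, Real.norm_of_nonneg ht.1, ← one_div]
  exact div_le_div₀ zero_le_one ht.2 (by positivity)
    (pow_le_pow_left₀ hpos.le (one_sub_mul_le_norm_one_sub_ofReal_mul ht.1 hx) 2)

lemma intervalIntegrable_inv_one_sub_mul_sq {r : ℝ} (hr : r < 1) :
    IntervalIntegrable (fun t : ℝ => ((1 - t * r) ^ 2)⁻¹) volume 0 1 := by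
  refine ContinuousOn.intervalIntegrable (ContinuousOn.inv₀ (by fun_prop) fun t ht => ?_)
  rw [uIcc_of_le zero_le_one] at ht
  exact pow_ne_zero 2 (one_sub_mul_pos ht hr).ne'

lemma integral_inv_one_sub_mul_sq {r : ℝ} (hr : r < 1) :
    ∫ t in (0 : ℝ)..1, ((1 - t * r) ^ 2)⁻¹ = (1 - r)⁻¹ := by
  -- `t / (1 - t r)` is an antiderivative that needs no case split on `r = 0`.
  rw [integral_eq_sub_of_hasDerivAt (f := fun t => t / (1 - t * r)) (fun t ht => ?_)
    (intervalIntegrable_inv_one_sub_mul_sq hr)]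
  · simp
  · rw [uIcc_of_le zero_le_one] at ht
    refine ((hasDerivAt_id' t).div (((hasDerivAt_id' t).mul_const r).const_sub 1)
      (one_sub_mul_pos ht hr).ne').congr_deriv ?_
    field_simp
    ring

lemma hasDerivAt_cesaro_one {z : ℂ} (hz : ‖z‖ < 1) :
    HasDerivAt (cesaro fun _ => 1) (∫ t in (0 : ℝ)..1, (t : ℂ) / (1 - t * z) ^ 2) z := by
  set r := (1 + ‖z‖) / 2 with hr_def
  have hr : r < 1 := by linarith
  have hzr : z ∈ ball (0 : ℂ) r := by rw [mem_ball_zero_iff]; linarith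
  have hIcc : ∀ t ∈ Ι (0 : ℝ) 1, t ∈ Icc (0 : ℝ) 1 := fun t ht =>
    Ioc_subset_Icc_self (by rwa [uIoc_of_le zero_le_one] at ht)
  have hne : ∀ t ∈ Ι (0 : ℝ) 1, ∀ x ∈ ball (0 : ℂ) r, 1 - (t : ℂ) * x ≠ 0 := fun t ht x hx =>
    one_sub_ofReal_mul_ne_zero (hIcc t ht) ((mem_ball_zero_iff.mp hx).trans hr)
  have hF_int : IntervalIntegrable (fun t : ℝ => (1 : ℂ) / (1 - t * z)) volume 0 1 := by
    refine ContinuousOn.intervalIntegrable (ContinuousOn.div (by fun_prop) (by fun_prop) ?_)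
    intro t ht
    rw [uIcc_of_le zero_le_one] at ht
    exact one_sub_ofReal_mul_ne_zero ht hz
  have hF'_le : ∀ t ∈ Ι (0 : ℝ) 1, ∀ x ∈ ball (0 : ℂ) r,
      ‖(t : ℂ) / (1 - t * x) ^ 2‖ ≤ ((1 - t * r) ^ 2)⁻¹ := fun t ht x hx =>
    norm_ofReal_div_one_sub_ofReal_mul_sq_le (hIcc t ht) (mem_ball_zero_iff.mp hx).le hr
  have hF' : ∀ t ∈ Ι (0 : ℝ) 1, ∀ x ∈ ball (0 : ℂ) r,
      HasDerivAt (fun x => 1 / (1 - (t : ℂ) * x)) ((t : ℂ) / (1 - t * x) ^ 2) x := by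
    intro t ht x hx
    refine ((hasDerivAt_const x 1).div (((hasDerivAt_id' x).const_mul (t : ℂ)).const_sub 1)
      (hne t ht x hx)).congr_deriv ?_
    ring
  exact (hasDerivAt_integral_of_dominated_loc_of_deriv_le (isOpen_ball.mem_nhds hzr)
    (.of_forall fun x => (by fun_prop : Measurable _).aestronglyMeasurable) hF_int
    (by fun_prop : Measurable _).aestronglyMeasurable (.of_forall hF'_le)
    (intervalIntegrable_inv_one_sub_mul_sq hr) (.of_forall hF')).2

lemma norm_deriv_cesaro_one_le {z : ℂ} (hz : ‖z‖ < 1) :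
    ‖deriv (cesaro fun _ => 1) z‖ ≤ (1 - ‖z‖)⁻¹ := by
  rw [(hasDerivAt_cesaro_one hz).deriv, ← integral_inv_one_sub_mul_sq hz]
  refine norm_integral_le_of_norm_le zero_le_one (.of_forall fun t ht => ?_)
    (intervalIntegrable_inv_one_sub_mul_sq hz)
  exact norm_ofReal_div_one_sub_ofReal_mul_sq_le (Ioc_subset_Icc_self ht) le_rfl hz

lemma cesaro_one_zero : cesaro (fun _ => 1) 0 = 1 := by
  simp [cesaro]

lemma deriv_cesaro_one_zero : deriv (cesaro fun _ => 1) 0 = 1 / 2 := by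
  rw [(hasDerivAt_cesaro_one (by simp)).deriv]
  simp [integral_ofReal]

lemma bddAbove_blochWeightedDerivs_cesaro_one {α : ℝ} (hα : 1 ≤ α) :
    BddAbove (blochWeightedDerivs α (cesaro fun _ => 1)) := by
  refine ⟨2, ?_⟩
  rintro _ ⟨z, hz, rfl⟩
  have h0 : 0 < 1 - ‖z‖ := sub_pos.mpr hz
  have hw : 0 ≤ 1 - ‖z‖ ^ 2 := by nlinarith [norm_nonneg z]
  calc (1 - ‖z‖ ^ 2) ^ α * ‖deriv (cesaro fun _ => 1) z‖
      ≤ (1 - ‖z‖ ^ 2) * (1 - ‖z‖)⁻¹ :=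
        mul_le_mul (Real.rpow_le_self_of_le_one hw (by nlinarith [norm_nonneg z]) hα)
          (norm_deriv_cesaro_one_le hz) (norm_nonneg _) hw
    _ = 1 + ‖z‖ := by field_simp; ring
    _ ≤ 2 := by linarith

lemma three_halves_le_blochNorm_cesaro_one {α : ℝ} (hα : 1 ≤ α) :
    3 / 2 ≤ blochNorm α (cesaro fun _ => 1) := by
  have h := add_le_blochNorm (bddAbove_blochWeightedDerivs_cesaro_one hα)
    (norm_zero.trans_lt zero_lt_one)
  rw [cesaro_one_zero, deriv_cesaro_one_zero] at h
  norm_num at h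
  linarith

theorem cesaro_stmt_15 (α : ℝ) (hα : 1 < α) :
    ∀ c : ℝ, (∀ f : ℂ → ℂ, DifferentiableOn ℂ f (Metric.ball 0 1) →
      BddAbove {y : ℝ | ∃ z : ℂ, ‖z‖ < 1 ∧ y = (1 - ‖z‖ ^ 2) ^ α * ‖deriv f z‖} →
      blochNorm α (cesaro f) ≤ c * blochNorm α f) →
    3 / 2 ≤ c := by
  intro c hc
  have hconst : BddAbove (blochWeightedDerivs α fun _ => 1) := by
    rw [blochWeightedDerivs_const]
    exact bddAbove_singleton
  have hbound := hc (fun _ => 1) (differentiableOn_const 1) hconst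
  rw [blochNorm_const, norm_one, mul_one] at hbound
  exact (three_halves_le_blochNorm_cesaro_one hα.le).trans hbound
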